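/- There exist a finite time t_L > 0 and Lipschitz functions φ_1,…,φ_n : ℝ → ℝ such that for every t > t_L: (i) X_1^−(t) < X_1^+(t) < X_2^−(t) < X_2^+(t) < ⋯ < X_n^−(t) < X_n^+(t); (ii) for a.e. x ∈ ℝ: w(t,x) = w̄^− if x ≤ X_1^−(t); w(t,x) = w̄^i if X_i^+(t) < x ≤ X_{i+1}^−(t) for some i ∈ {1,…,n−1}; w(t,x) = w̄^+ if x > X_n^+(t); and if X_i^−(t) < x ≤ X_i^+(t) for some i ∈ {1,…,n}, then w_j(t,x) = w̄_j^+ for all j < i, w_j(t,x) = w̄_j^− for all j > i, and w_i(t,x) = w_i^0(φ_i(x − λ_i(w̄^i)·t)). In other words, after the finite time t_L the entropy solution is an exact superposition of constant states and of n traveling waves, the i-th one moving with the constant speed λ_i(w̄^i). -/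

import Mathlib

/-!
In the Lagrangian coordinate `Y_i` (`∂ₓ Y_i = N_i`, `∂ₜ Y_i = -N_i λ_i`) the invariant `w_i` is
frozen, so `w_i = w̄_i^-` left of the characteristic `X_i^-` and `w_i = w̄_i^+` right of `X_i^+`.
Along an `i`-characteristic, `Y_{i+1}` decreases at rate `N_{i+1} (λ_{i+1} - λ_i) ≥ c σ` (chain
rule at the points where Rademacher's theorem applies, which a.e. characteristic meets at a.e.
time), so after a finite time the `i`-zone lies strictly to the left of the `(i+1)`-zone. Inside
the `i`-zone all other invariants are then constant, linear degeneracy freezes `λ_i` at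
`λ_i(w̄^i)`, the `i`-characteristics are straight lines of that slope, and `w_i` is a traveling
wave.
-/

open MeasureTheory Filter Set Function

open scoped NNReal

theorem closure_subset_of_ae_imp {X : Type*} [TopologicalSpace X] [MeasurableSpace X]
    {μ : Measure X} [μ.IsOpenPosMeasure] {s U : Set X} (hs : IsClosed s) (hU : IsOpen U)
    (h : ∀ᵐ x ∂μ, x ∈ U → x ∈ s) : closure U ⊆ s := by
  have hnull : μ (U ∩ sᶜ) = 0 :=
    measure_mono_null (fun x hx (hxs : x ∈ U → x ∈ s) => hx.2 (hxs hx.1)) (ae_iff.1 h)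
  have hempty := (hU.inter hs.isOpen_compl).eq_empty_of_measure_zero hnull
  exact closure_minimal (fun x hx => by_contra fun hxs => hempty.subset ⟨hx, hxs⟩) hs

theorem LipschitzOnWith.sub_le_mul_of_ae_deriv_le {f : ℝ → ℝ} {K : ℝ≥0} {a b M : ℝ}
    (hf : LipschitzOnWith K f (Icc a b)) (hab : a ≤ b)
    (h : ∀ᵐ x, x ∈ Ioo a b → deriv f x ≤ M) : f b - f a ≤ M * (b - a) := by
  have hac := (hf.mono (uIcc_of_le hab).subset).absolutelyContinuousOnInterval
  rw [← hac.integral_deriv_eq_sub, mul_comm, ← smul_eq_mul, ← intervalIntegral.integral_const]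
  refine intervalIntegral.integral_mono_ae_restrict hab hac.intervalIntegrable_deriv
    intervalIntegrable_const ?_
  rw [EventuallyLE, ae_restrict_iff' measurableSet_Icc]
  filter_upwards [h, (Ioo_ae_eq_Icc (μ := volume) (a := a) (b := b)).mem_iff] with x hx hIoo hIcc
  exact hx (hIoo.2 hIcc)

theorem LipschitzOnWith.mul_sub_le_sub_of_ae_le_deriv {f : ℝ → ℝ} {K : ℝ≥0} {a b M : ℝ}
    (hf : LipschitzOnWith K f (Icc a b)) (hab : a ≤ b)
    (h : ∀ᵐ x, x ∈ Ioo a b → M ≤ deriv f x) : M * (b - a) ≤ f b - f a := by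
  have hneg : LipschitzOnWith K (-f) (Icc a b) := by
    simpa [LipschitzOnWith, edist_neg_neg] using hf
  have := hneg.sub_le_mul_of_ae_deriv_le hab (M := -M) (by
    filter_upwards [h] with x hx hxI
    rw [deriv.neg']
    exact neg_le_neg (hx hxI))
  simp only [Pi.neg_apply] at this
  linarith

theorem LipschitzWith.volume_image_null {f : ℝ → ℝ} {K : ℝ≥0} (hf : LipschitzWith K f)
    {s : Set ℝ} (hs : volume s = 0) : volume (f '' s) = 0 := by
  have h := hf.hausdorffMeasure_image_le zero_le_one s
  rw [hausdorffMeasure_real, hs, mul_zero] at h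
  exact le_antisymm h zero_le

theorem DifferentiableAt.hasDerivAt_comp_prodMk {F : ℝ × ℝ → ℝ} {γ : ℝ → ℝ} {t a b v : ℝ}
    (hF : DifferentiableAt ℝ F (t, γ t)) (ha : HasDerivAt (fun s => F (s, γ t)) a t)
    (hb : HasDerivAt (fun x => F (t, x)) b (γ t)) (hγ : HasDerivAt γ v t) :
    HasDerivAt (fun s => F (s, γ s)) (a + b * v) t := by
  have hFa : fderiv ℝ F (t, γ t) (1, 0) = a := (hF.hasFDerivAt.comp_hasDerivAt t
    ((hasDerivAt_id t).prodMk (hasDerivAt_const t (γ t)))).unique ha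
  have hFb : fderiv ℝ F (t, γ t) (0, 1) = b := (hF.hasFDerivAt.comp_hasDerivAt (γ t)
    ((hasDerivAt_const (γ t) t).prodMk (hasDerivAt_id (γ t)))).unique hb
  refine (hF.hasFDerivAt.comp_hasDerivAt t ((hasDerivAt_id t).prodMk hγ)).congr_deriv ?_
  rw [show ((1 : ℝ), v) = (1, 0) + v • (0, 1) by simp, map_add, map_smul, hFa, hFb, smul_eq_mul,
    mul_comm]

def Interleaved {n : ℕ} {α : Type*} [Preorder α] (a b : Fin n → α) : Prop :=
  (∀ i, a i < b i) ∧ ∀ i j : Fin n, (i : ℕ) + 1 = j → b i < a j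

namespace Interleaved

variable {n : ℕ} {α β : Type*} [Preorder α] {a b : Fin n → α}

theorem lt (h : Interleaved a b) {i j : Fin n} (hij : i < j) : b i < a j := by
  obtain ⟨i, hi⟩ := i
  obtain ⟨j, hj⟩ := j
  rw [Fin.mk_lt_mk] at hij
  induction j, hij using Nat.le_induction with
  | base => exact h.2 _ _ rfl
  | succ m hm ih =>
    calc b ⟨i, hi⟩ < a ⟨m, by omega⟩ := ih (by omega)
      _ < b ⟨m, by omega⟩ := h.1 _
      _ < a ⟨m + 1, hj⟩ := h.2 _ _ rfl

theorem monotone_left (h : Interleaved a b) : Monotone a := fun _ _ hij =>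
  hij.eq_or_lt.elim (fun e => e ▸ le_rfl) fun hlt => ((h.1 _).trans (h.lt hlt)).le

theorem monotone_right (h : Interleaved a b) : Monotone b := fun _ _ hij =>
  hij.eq_or_lt.elim (fun e => e ▸ le_rfl) fun hlt => ((h.lt hlt).trans (h.1 _)).le

variable {u um up : Fin n → β} {x : α}

theorem eq_of_mem_Icc (h : Interleaved a b) (hm : ∀ j, x ≤ a j → u j = um j)
    (hp : ∀ j, b j ≤ x → u j = up j) {i : Fin n} (hx : x ∈ Icc (a i) (b i)) :
    (∀ j, j < i → u j = up j) ∧ (∀ j, i < j → u j = um j) :=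
  ⟨fun j hj => hp j ((h.lt hj).le.trans hx.1), fun j hj => hm j (hx.2.trans (h.lt hj).le)⟩

theorem eq_on_regions (h : Interleaved a b) (hn : 0 < n) (hm : ∀ j, x ≤ a j → u j = um j)
    (hp : ∀ j, b j ≤ x → u j = up j) :
    (x ≤ a ⟨0, hn⟩ → u = um) ∧
    (∀ i j : Fin n, (i : ℕ) + 1 = j → b i < x → x ≤ a j →
      u = fun l => if l ≤ i then up l else um l) ∧
    (b ⟨n - 1, by omega⟩ < x → u = up) ∧
    (∀ i : Fin n, a i < x → x ≤ b i →
      (∀ j, j < i → u j = up j) ∧ (∀ j, i < j → u j = um j)) := by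
  have hfirst : ∀ l : Fin n, ⟨0, hn⟩ ≤ l := fun l => Fin.le_def.2 (Nat.zero_le _)
  have hlast : ∀ l : Fin n, l ≤ ⟨n - 1, by omega⟩ := fun l =>
    Fin.le_def.2 (Nat.le_sub_one_of_lt l.2)
  refine ⟨fun hx => funext fun l => hm l (hx.trans (h.monotone_left (hfirst l))),
    fun i j hij hbx hxa => funext fun l => ?_,
    fun hx => funext fun l => hp l ((h.monotone_right (hlast l)).trans hx.le),
    fun i hax hxb => h.eq_of_mem_Icc hm hp ⟨hax.le, hxb⟩⟩
  split_ifs with hl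
  · exact hp l ((h.monotone_right hl).trans hbx.le)
  · exact hm l (hxa.trans (h.monotone_left (Fin.le_def.2 (by omega))))

end Interleaved

/-- `Y t` is a Lagrangian coordinate of a transport equation with speed `v`, in the sense that
`∂ₓ Y = ρ ≥ c > 0` and `∂ₜ Y = -ρ v` a.e. on `t ≥ 0`; `X t` is its inverse, so that the
characteristics are the curves `t ↦ X t z`. -/
structure LagrangianCoordinate (Y X ρ v : ℝ → ℝ → ℝ) (c : ℝ) (K : ℝ≥0) : Prop where
  lipschitzOnWith : LipschitzOnWith K (uncurry Y) (Ici 0 ×ˢ univ)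
  right_inv : ∀ ⦃t⦄, 0 ≤ t → ∀ z, Y t (X t z) = z
  pos : 0 < c
  le_density : ∀ ⦃t⦄, 0 ≤ t → ∀ x, c ≤ ρ t x
  hasDerivAt_space : ∀ᵐ p : ℝ × ℝ, 0 ≤ p.1 → HasDerivAt (Y p.1) (ρ p.1 p.2) p.2
  hasDerivAt_time : ∀ᵐ p : ℝ × ℝ, 0 ≤ p.1 →
    HasDerivAt (fun t => Y t p.2) (-(ρ p.1 p.2 * v p.1 p.2)) p.1

namespace LagrangianCoordinate

variable {Y X ρ v : ℝ → ℝ → ℝ} {c : ℝ} {K : ℝ≥0}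

theorem lipschitzWith_slice (h : LagrangianCoordinate Y X ρ v c K)
    {t : ℝ} (ht : 0 ≤ t) : LipschitzWith K (Y t) :=
  LipschitzWith.of_dist_le_mul fun x y => by
    simpa [Prod.dist_eq] using
      h.lipschitzOnWith.dist_le_mul (t, x) ⟨ht, trivial⟩ (t, y) ⟨ht, trivial⟩

theorem dist_time_le (h : LagrangianCoordinate Y X ρ v c K)
    {t s : ℝ} (ht : 0 ≤ t) (hs : 0 ≤ s) (x : ℝ) :
    dist (Y t x) (Y s x) ≤ K * dist t s := by
  simpa [Prod.dist_eq] using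
    h.lipschitzOnWith.dist_le_mul (t, x) ⟨ht, trivial⟩ (s, x) ⟨hs, trivial⟩

theorem continuousOn_time (h : LagrangianCoordinate Y X ρ v c K)
    (x : ℝ) : ContinuousOn (fun t => Y t x) (Ici 0) :=
  h.lipschitzOnWith.continuousOn.comp (continuous_id.prodMk continuous_const).continuousOn
    fun _ ht => ⟨ht, trivial⟩

theorem mul_sub_le_sub (h : LagrangianCoordinate Y X ρ v c K)
    {t x y : ℝ} (ht : 0 ≤ t) (hxy : x ≤ y) :
    c * (y - x) ≤ Y t y - Y t x := by
  have hae : ∀ᵐ t : ℝ, ∀ᵐ x : ℝ, 0 ≤ t → HasDerivAt (Y t) (ρ t x) x := by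
    have := h.hasDerivAt_space
    rw [Measure.volume_eq_prod] at this
    exact Measure.ae_ae_of_ae_prod this
  have hclosed : IsClosed (Ici 0 ∩ (fun t => Y t y - Y t x) ⁻¹' Ici (c * (y - x))) :=
    ((h.continuousOn_time y).sub (h.continuousOn_time x)).preimage_isClosed_of_isClosed
      isClosed_Ici isClosed_Ici
  refine (closure_subset_of_ae_imp (μ := volume) hclosed isOpen_Ioi ?_ (by rwa [closure_Ioi])).2
  filter_upwards [hae] with t hderiv (htpos : 0 < t)
  refine ⟨htpos.le, ?_⟩
  refine (h.lipschitzWith_slice htpos.le).lipschitzOnWith.mul_sub_le_sub_of_ae_le_deriv hxy ?_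
  filter_upwards [hderiv] with u hu _
  rw [(hu htpos.le).deriv]
  exact h.le_density htpos.le u

theorem strictMono (h : LagrangianCoordinate Y X ρ v c K)
    {t : ℝ} (ht : 0 ≤ t) : StrictMono (Y t) := fun x y hxy => by
  nlinarith [h.mul_sub_le_sub ht hxy.le, h.pos]

theorem left_inv (h : LagrangianCoordinate Y X ρ v c K)
    {t : ℝ} (ht : 0 ≤ t) (x : ℝ) : X t (Y t x) = x :=
  (h.strictMono ht).injective (h.right_inv ht _)

theorem inv_lt_iff (h : LagrangianCoordinate Y X ρ v c K)
    {t z x : ℝ} (ht : 0 ≤ t) : X t z < x ↔ z < Y t x := by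
  rw [← (h.strictMono ht).lt_iff_lt, h.right_inv ht]

theorem lt_inv_iff (h : LagrangianCoordinate Y X ρ v c K)
    {t z x : ℝ} (ht : 0 ≤ t) : x < X t z ↔ Y t x < z := by
  rw [← (h.strictMono ht).lt_iff_lt, h.right_inv ht]

theorem le_inv_iff (h : LagrangianCoordinate Y X ρ v c K)
    {t z x : ℝ} (ht : 0 ≤ t) : x ≤ X t z ↔ Y t x ≤ z := by
  rw [← (h.strictMono ht).le_iff_le, h.right_inv ht]

theorem inv_le_iff (h : LagrangianCoordinate Y X ρ v c K)
    {t z x : ℝ} (ht : 0 ≤ t) : X t z ≤ x ↔ z ≤ Y t x := by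
  rw [← (h.strictMono ht).le_iff_le, h.right_inv ht]

theorem inv_strictMono (h : LagrangianCoordinate Y X ρ v c K)
    {t : ℝ} (ht : 0 ≤ t) : StrictMono (X t) := fun z z' hzz' => by
  rwa [h.inv_lt_iff ht, h.right_inv ht]

theorem mul_dist_le_dist (h : LagrangianCoordinate Y X ρ v c K) {t : ℝ} (ht : 0 ≤ t) (x y : ℝ) :
    c * dist x y ≤ dist (Y t x) (Y t y) := by
  wlog hxy : x ≤ y generalizing x y
  · rw [dist_comm, dist_comm (Y t x)]
    exact this y x (le_of_not_ge hxy)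
  rw [dist_comm, dist_comm (Y t x), Real.dist_eq, Real.dist_eq, abs_of_nonneg (sub_nonneg.2 hxy)]
  exact (h.mul_sub_le_sub ht hxy).trans (le_abs_self _)

theorem mul_dist_inv_le (h : LagrangianCoordinate Y X ρ v c K) {t : ℝ} (ht : 0 ≤ t) (z z' : ℝ) :
    c * dist (X t z) (X t z') ≤ dist z z' := by
  simpa only [h.right_inv ht] using h.mul_dist_le_dist ht (X t z) (X t z')

theorem mul_dist_inv_time_le (h : LagrangianCoordinate Y X ρ v c K)
    {t s : ℝ} (ht : 0 ≤ t) (hs : 0 ≤ s) (z : ℝ) :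
    c * dist (X t z) (X s z) ≤ K * dist t s := by
  calc c * dist (X t z) (X s z) ≤ dist (Y t (X t z)) (Y t (X s z)) := h.mul_dist_le_dist ht _ _
    _ = dist (Y s (X s z)) (Y t (X s z)) := by rw [h.right_inv ht, h.right_inv hs]
    _ ≤ K * dist t s := by rw [dist_comm t]; exact h.dist_time_le hs ht _

theorem lipschitzWith_inv (h : LagrangianCoordinate Y X ρ v c K)
    {t : ℝ} (ht : 0 ≤ t) : LipschitzWith (Real.toNNReal c⁻¹) (X t) :=
  LipschitzWith.of_dist_le' fun z z' => by
    rw [inv_mul_eq_div, le_div_iff₀ h.pos, mul_comm]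
    exact h.mul_dist_inv_le ht z z'

theorem lipschitzOnWith_inv_time (h : LagrangianCoordinate Y X ρ v c K) (z : ℝ) :
    LipschitzOnWith (Real.toNNReal (K / c)) (fun s => X s z) (Ici 0) :=
  LipschitzOnWith.of_dist_le' fun s hs s' hs' => by
    rw [div_mul_eq_mul_div, le_div_iff₀ h.pos, mul_comm]
    exact h.mul_dist_inv_time_le hs hs' z

theorem continuousOn_uncurry_inv (h : LagrangianCoordinate Y X ρ v c K)
    : ContinuousOn (uncurry X) (Ici 0 ×ˢ univ) :=
  continuousOn_prod_of_continuousOn_lipschitzOnWith (uncurry X) _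
    (fun _ ht => (h.lipschitzWith_inv ht).continuous.continuousOn)
    (fun z _ => h.lipschitzOnWith_inv_time z)

theorem ae_differentiableAt (h : LagrangianCoordinate Y X ρ v c K) :
    ∀ᵐ p : ℝ × ℝ, 0 < p.1 → DifferentiableAt ℝ (uncurry Y) p ∧
      HasDerivAt (fun t => Y t p.2) (-(ρ p.1 p.2 * v p.1 p.2)) p.1 ∧
      HasDerivAt (Y p.1) (ρ p.1 p.2) p.2 := by
  have hopen : IsOpen (Ioi (0 : ℝ) ×ˢ (univ : Set ℝ)) := isOpen_Ioi.prod isOpen_univ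
  have hrad := (h.lipschitzOnWith.mono (prod_mono Ioi_subset_Ici_self subset_rfl)
    ).ae_differentiableWithinAt_of_mem (μ := volume)
  filter_upwards [hrad, h.hasDerivAt_time, h.hasDerivAt_space] with p hd ht hx hp
  exact ⟨(hd ⟨hp, trivial⟩).differentiableAt (hopen.mem_nhds ⟨hp, trivial⟩), ht hp.le, hx hp.le⟩

/-- The characteristics through the time-`t` slice of a null set are the image of that slice
under the Lipschitz map `Y t`, hence null for a.e. `t`; Fubini then swaps the two quantifiers. -/
theorem ae_ae_comp_inv (h : LagrangianCoordinate Y X ρ v c K) {P : ℝ × ℝ → Prop}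
    (hP : ∀ᵐ p : ℝ × ℝ, 0 < p.1 → P p) : ∀ᵐ z, ∀ᵐ t, 0 < t → P (t, X t z) := by
  set N := toMeasurable volume {p : ℝ × ℝ | ¬(0 < p.1 → P p)}
  have hN : volume N = 0 := by rw [measure_toMeasurable]; exact ae_iff.1 hP
  rw [Measure.volume_eq_prod] at hN
  have hslice : ∀ᵐ t : ℝ, ∀ᵐ z : ℝ, 0 < t → (t, X t z) ∉ N := by
    filter_upwards [Measure.measure_ae_null_of_prod_null hN] with t ht
    rcases le_or_gt t 0 with ht0 | ht0
    · exact Eventually.of_forall fun z htpos => absurd htpos ht0.not_gt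
    have himage : volume {z | (t, X t z) ∈ N} = 0 :=
      measure_mono_null (fun z (hz : (t, X t z) ∈ N) =>
          (⟨X t z, hz, h.right_inv ht0.le z⟩ : z ∈ Y t '' (Prod.mk t ⁻¹' N)))
        ((h.lipschitzWith_slice ht0.le).volume_image_null ht)
    filter_upwards [measure_eq_zero_iff_ae_notMem.1 himage] with z hz _ using hz
  have hΦ : Continuous fun q : ℝ × ℝ => (q.1, X (max q.1 0) q.2) :=
    continuous_fst.prodMk (h.continuousOn_uncurry_inv.comp_continuous
      ((continuous_fst.max continuous_const).prodMk continuous_snd)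
      fun q => ⟨mem_Ici.2 (le_max_right q.1 0), trivial⟩)
  have hmeas : MeasurableSet {q : ℝ × ℝ | 0 < q.1 → (q.1, X q.1 q.2) ∉ N} := by
    have : {q : ℝ × ℝ | 0 < q.1 → (q.1, X q.1 q.2) ∉ N} =
        {q : ℝ × ℝ | 0 < q.1}ᶜ ∪ (fun q : ℝ × ℝ => (q.1, X (max q.1 0) q.2)) ⁻¹' Nᶜ := by
      ext q
      by_cases hq : 0 < q.1
      · simp [hq, max_eq_left hq.le]
      · simp [hq]
    rw [this]
    exact (measurableSet_lt measurable_const measurable_fst).compl.union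
      (hΦ.measurable (measurableSet_toMeasurable _ _).compl)
  rw [Measure.ae_ae_comm hmeas] at hslice
  filter_upwards [hslice] with z hz
  filter_upwards [hz] with t ht htpos
  by_contra hPt
  exact ht htpos (subset_toMeasurable _ _ fun hP' => hPt (hP' htpos))

theorem ae_ae_hasDerivAt_inv (h : LagrangianCoordinate Y X ρ v c K) :
    ∀ᵐ z, ∀ᵐ t, 0 < t → HasDerivAt (fun s => X s z) (v t (X t z)) t := by
  filter_upwards [h.ae_ae_comp_inv h.ae_differentiableAt] with z hz
  have hdiff := ((h.lipschitzOnWith_inv_time z).mono Ioi_subset_Ici_self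
    ).ae_differentiableWithinAt_of_mem (μ := volume)
  filter_upwards [hz, hdiff] with t hgood hd htpos
  obtain ⟨hF, htime, hspace⟩ := hgood htpos
  have hX := ((hd htpos).differentiableAt (Ioi_mem_nhds htpos)).hasDerivAt
  have hchain := hF.hasDerivAt_comp_prodMk htime hspace hX
  have hconst : HasDerivAt (fun s => Y s (X s z)) 0 t :=
    (hasDerivAt_const t z).congr_of_eventuallyEq
      (eventually_of_mem (Ioi_mem_nhds htpos) fun s (hs : 0 < s) => h.right_inv hs.le z)
  have hρ : 0 < ρ t (X t z) := h.pos.trans_le (h.le_density htpos.le _)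
  have hspeed : ρ t (X t z) * deriv (fun s => X s z) t = ρ t (X t z) * v t (X t z) := by
    linarith [hchain.unique hconst]
  rwa [← mul_left_cancel₀ hρ.ne' hspeed]

theorem ae_ae_hasDerivAt_comp_inv (h : LagrangianCoordinate Y X ρ v c K)
    {Y' X' ρ' v' : ℝ → ℝ → ℝ} {c' : ℝ} {K' : ℝ≥0} (h' : LagrangianCoordinate Y' X' ρ' v' c' K') :
    ∀ᵐ z, ∀ᵐ t, 0 < t → HasDerivAt (fun s => Y' s (X s z))
      (ρ' t (X t z) * (v t (X t z) - v' t (X t z))) t := by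
  filter_upwards [h.ae_ae_comp_inv h'.ae_differentiableAt, h.ae_ae_hasDerivAt_inv] with z hz hX
  filter_upwards [hz, hX] with t hgood hXt htpos
  obtain ⟨hF, htime, hspace⟩ := hgood htpos
  refine (hF.hasDerivAt_comp_prodMk htime hspace (hXt htpos)).congr_deriv ?_
  ring

theorem inv_zero_apply_le_iff (h : LagrangianCoordinate Y X ρ v c K) {t x a : ℝ} (ht : 0 ≤ t) :
    X 0 (Y t x) ≤ a ↔ x ≤ X t (Y 0 a) := by
  rw [h.le_inv_iff ht, h.inv_le_iff le_rfl]

theorem le_inv_zero_apply_iff (h : LagrangianCoordinate Y X ρ v c K) {t x a : ℝ} (ht : 0 ≤ t) :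
    a ≤ X 0 (Y t x) ↔ X t (Y 0 a) ≤ x := by
  rw [h.inv_le_iff ht, h.le_inv_iff le_rfl]

theorem apply_inv_le (h : LagrangianCoordinate Y X ρ v c K)
    {Y' X' ρ' v' : ℝ → ℝ → ℝ} {c' : ℝ} {K' : ℝ≥0} (h' : LagrangianCoordinate Y' X' ρ' v' c' K')
    {δ : ℝ} (hδ : ∀ t, 0 < t → ∀ x, ρ' t x * (v t x - v' t x) ≤ -δ) {t : ℝ} (ht : 0 ≤ t)
    (z : ℝ) : Y' t (X t z) ≤ Y' 0 (X 0 z) - δ * t := by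
  have hclosed : IsClosed {z | Y' t (X t z) ≤ Y' 0 (X 0 z) - δ * t} :=
    isClosed_le ((h'.lipschitzWith_slice ht).continuous.comp (h.lipschitzWith_inv ht).continuous)
      (((h'.lipschitzWith_slice le_rfl).continuous.comp
        (h.lipschitzWith_inv le_rfl).continuous).sub continuous_const)
  refine closure_subset_of_ae_imp (μ := volume) hclosed isOpen_univ ?_
    (by rw [closure_univ]; trivial)
  filter_upwards [h.ae_ae_hasDerivAt_comp_inv h'] with z hz _
  have hcurve : LipschitzOnWith (max 1 (Real.toNNReal (K / c))) (fun s => (s, X s z)) (Ici 0) :=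
    LipschitzWith.id.lipschitzOnWith.prodMk (h.lipschitzOnWith_inv_time z)
  have hlip : LipschitzOnWith _ (fun s => Y' s (X s z)) (Icc 0 t) :=
    (h'.lipschitzOnWith.comp hcurve fun s hs => ⟨hs, trivial⟩).mono
    (Icc_subset_Ici_self : Icc 0 t ⊆ Ici 0)
  have := hlip.sub_le_mul_of_ae_deriv_le ht (M := -δ) (by
    filter_upwards [hz] with s hs hsI
    rw [(hs hsI.1).deriv]
    exact hδ s hsI.1 _)
  linarith

theorem inv_eq_add_of_speed_eq (h : LagrangianCoordinate Y X ρ v c K) {a b T V : ℝ} (hab : a < b)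
    (hT : 0 ≤ T) (hv : ∀ t, T < t → ∀ z ∈ Icc a b, v t (X t z) = V) {t t' : ℝ} (ht : T < t)
    (ht' : T < t') {z : ℝ} (hz : z ∈ Icc a b) : X t z = X t' z + V * (t - t') := by
  have hclosed : IsClosed {z | X t z = X t' z + V * (t - t')} :=
    isClosed_eq (h.lipschitzWith_inv (hT.trans ht.le)).continuous
      ((h.lipschitzWith_inv (hT.trans ht'.le)).continuous.add continuous_const)
  refine closure_subset_of_ae_imp (μ := volume) hclosed isOpen_Ioo ?_
    (by rwa [closure_Ioo hab.ne])
  filter_upwards [h.ae_ae_hasDerivAt_inv] with z hz hzab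
  have hsub : uIcc t t' ⊆ Ioi T := fun s hs => (lt_min ht ht').trans_le hs.1
  have hac : AbsolutelyContinuousOnInterval (fun s => X s z - V * s) t t' :=
    ((h.lipschitzOnWith_inv_time z).mono fun s hs => hT.trans (hsub hs).le
      ).absolutelyContinuousOnInterval.sub
      (LipschitzWith.id.lipschitzOnWith.absolutelyContinuousOnInterval.const_mul V)
  obtain ⟨C, hC⟩ := hac.const_of_ae_hasDerivAt_zero (by
    filter_upwards [hz] with s hs hsI
    have hsT : T < s := hsub hsI
    have := (hs (hT.trans_lt hsT)).sub ((hasDerivAt_id s).const_mul V)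
    rwa [hv s hsT z (Ioo_subset_Icc_self hzab), mul_one, sub_self] at this)
  have h1 := hC t left_mem_uIcc
  have h2 := hC t' right_mem_uIcc
  linarith

theorem apply_eq_of_speed_eq (h : LagrangianCoordinate Y X ρ v c K) {a b T V : ℝ} (hab : a < b)
    (hT : 0 ≤ T) (hv : ∀ t, T < t → ∀ z ∈ Icc a b, v t (X t z) = V) {t t' x : ℝ} (ht : T < t)
    (ht' : T < t') (hx : Y t x ∈ Icc a b) : Y t x = Y t' (x - V * t + V * t') := by
  have htravel := h.inv_eq_add_of_speed_eq hab hT hv ht ht' hx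
  rw [h.left_inv (hT.trans ht.le)] at htravel
  rw [show x - V * t + V * t' = X t' (Y t x) by linarith, h.right_inv (hT.trans ht'.le)]

/-- In the `j`-th Lagrangian coordinate the right edge of the `i`-zone starts at `Y j 0 b` and,
by `apply_inv_le`, moves left by at least `δ t`, hence past the left edge `Y j 0 a` of the
`j`-zone. -/
theorem interleaved {n : ℕ} {Y X ρ v : Fin n → ℝ → ℝ → ℝ} {c δ : ℝ}
    {K : Fin n → ℝ≥0} (h : ∀ i, LagrangianCoordinate (Y i) (X i) (ρ i) (v i) c (K i))
    (hδ : ∀ i j : Fin n, (i : ℕ) + 1 = j → ∀ t, 0 < t → ∀ x, ρ j t x * (v i t x - v j t x) ≤ -δ)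
    {a b t : ℝ} (hab : a < b) (ht : 0 ≤ t) (hlate : ∀ j, Y j 0 b - Y j 0 a < δ * t) :
    Interleaved (fun i => X i t (Y i 0 a)) (fun i => X i t (Y i 0 b)) := by
  refine ⟨fun i => (h i).inv_strictMono ht ((h i).strictMono le_rfl hab), fun i j hij => ?_⟩
  have hfoot := (h i).apply_inv_le (h j) (hδ i j hij) ht (Y i 0 b)
  rw [(h i).left_inv le_rfl] at hfoot
  rw [(h j).lt_inv_iff ht]
  linarith [hlate j]

end LagrangianCoordinate

theorem stmt_19
    (n : ℕ) (hn : 2 ≤ n)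
    (K : Set (Fin n → ℝ))
    (lam : Fin n → (Fin n → ℝ) → ℝ)
    (σ : ℝ) (hσ : 0 < σ)
    (hgap : ∀ w ∈ K, ∀ i j : Fin n, (i : ℕ) + 1 = (j : ℕ) → σ ≤ lam j w - lam i w)
    (hlindeg : ∀ (i : Fin n) (w v : Fin n → ℝ),
      (∀ j, j ≠ i → w j = v j) → lam i w = lam i v)
    (Nf : Fin n → (Fin n → ℝ) → ℝ)
    (c C : ℝ) (hc : 0 < c)
    (hNbd : ∀ i : Fin n, ∀ w ∈ K, c ≤ Nf i w ∧ Nf i w ≤ C)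
    (L : ℝ) (hL : 0 < L)
    (wbarm wbarp : Fin n → ℝ)
    (w0 : ℝ → Fin n → ℝ)
    (hw0p : ∀ x : ℝ, L ≤ x → w0 x = wbarp) (hw0m' : ∀ x : ℝ, x ≤ -L → w0 x = wbarm)
    (Y0 Xc0 : Fin n → ℝ → ℝ)
    (hY0Xc0 : ∀ i z, Y0 i (Xc0 i z) = z)
    (w : ℝ → ℝ → Fin n → ℝ) (hwK : ∀ t x : ℝ, 0 ≤ t → w t x ∈ K)
    (Y : Fin n → ℝ → ℝ → ℝ)
    (hYLip : ∀ i, ∃ Li : NNReal,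
      LipschitzOnWith Li (fun p : ℝ × ℝ => Y i p.1 p.2) (Set.Ici 0 ×ˢ Set.univ))
    (hYx : ∀ i, ∀ᵐ p : ℝ × ℝ, 0 ≤ p.1 →
      HasDerivAt (fun x => Y i p.1 x) (Nf i (w p.1 p.2)) p.2)
    (hYt : ∀ i, ∀ᵐ p : ℝ × ℝ, 0 ≤ p.1 →
      HasDerivAt (fun t => Y i t p.2) (-(Nf i (w p.1 p.2) * lam i (w p.1 p.2))) p.1)
    (hYinit : ∀ i x, Y i 0 x = Y0 i x)
    (hwsol : ∀ (i : Fin n) (t x : ℝ), 0 ≤ t → w t x i = w0 (Xc0 i (Y i t x)) i)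
    (Xc : Fin n → ℝ → ℝ → ℝ)
    (hYXc : ∀ i t, 0 ≤ t → ∀ z, Y i t (Xc i t z) = z) :
    ∃ tL > (0:ℝ), ∃ φ : Fin n → ℝ → ℝ,
      (∀ i, ∃ Li : NNReal, LipschitzWith Li (φ i)) ∧
      ∀ t : ℝ, tL < t →
        ((∀ i : Fin n, Xc i t (Y0 i (-L)) < Xc i t (Y0 i L)) ∧
         (∀ i j : Fin n, (i : ℕ) + 1 = (j : ℕ) →
            Xc i t (Y0 i L) < Xc j t (Y0 j (-L))) ∧
         ∀ᵐ x : ℝ,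
           (x ≤ Xc ⟨0, by omega⟩ t (Y0 ⟨0, by omega⟩ (-L)) → w t x = wbarm) ∧
           (∀ i j : Fin n, (i : ℕ) + 1 = (j : ℕ) →
              Xc i t (Y0 i L) < x → x ≤ Xc j t (Y0 j (-L)) →
              w t x = fun l => if l ≤ i then wbarp l else wbarm l) ∧
           (Xc ⟨n - 1, by omega⟩ t (Y0 ⟨n - 1, by omega⟩ L) < x → w t x = wbarp) ∧
           (∀ i : Fin n, Xc i t (Y0 i (-L)) < x → x ≤ Xc i t (Y0 i L) →
              (∀ j, j < i → w t x j = wbarp j) ∧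
              (∀ j, i < j → w t x j = wbarm j) ∧
              w t x i = w0 (φ i
                (x - lam i (fun l => if l ≤ i then wbarp l else wbarm l) * t)) i)) := by
  choose Lip hLip using hYLip
  have hY : ∀ i, LagrangianCoordinate (Y i) (Xc i) (fun t x => Nf i (w t x))
      (fun t x => lam i (w t x)) c (Lip i) := fun i =>
    ⟨hLip i, hYXc i, hc, fun t ht x => (hNbd i _ (hwK t x ht)).1, hYx i, hYt i⟩
  obtain rfl : Y0 = fun i => Y i 0 := funext fun i => funext fun x => (hYinit i x).symm
  obtain rfl : Xc0 = fun i => Xc i 0 := funext fun i => funext fun z =>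
    ((hY i).strictMono le_rfl).injective ((hY0Xc0 i z).trans ((hY i).right_inv le_rfl z).symm)
  have hminus : ∀ i t x, 0 ≤ t → x ≤ Xc i t (Y i 0 (-L)) → w t x i = wbarm i :=
    fun i t x ht hx => by rw [hwsol i t x ht, hw0m' _ (((hY i).inv_zero_apply_le_iff ht).2 hx)]
  have hplus : ∀ i t x, 0 ≤ t → Xc i t (Y i 0 L) ≤ x → w t x i = wbarp i :=
    fun i t x ht hx => by rw [hwsol i t x ht, hw0p _ (((hY i).le_inv_zero_apply_iff ht).2 hx)]
  obtain ⟨T, hT⟩ : ∃ T, ∀ i, Y i 0 L - Y i 0 (-L) ≤ T := Finite.exists_le _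
  set tL := max T 1 / (c * σ)
  have htL : 0 < tL := by positivity
  have hsep : ∀ t, tL < t →
      Interleaved (fun i => Xc i t (Y i 0 (-L))) (fun i => Xc i t (Y i 0 L)) := by
    intro t ht
    refine LagrangianCoordinate.interleaved hY (δ := c * σ) (fun i j hij s hs x => ?_)
      (by linarith) (htL.le.trans ht.le) fun j => ?_
    · have hwsK := hwK s x hs.le
      nlinarith [(hNbd j _ hwsK).1, hgap _ hwsK i j hij]
    · have hlate : max T 1 < c * σ * t := by rwa [div_lt_iff₀ (by positivity), mul_comm] at ht
      linarith [hT j, le_max_left T 1]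
  set lb : Fin n → ℝ := fun i => lam i (fun l => if l ≤ i then wbarp l else wbarm l)
  have hspeed : ∀ i t, tL < t → ∀ z ∈ Icc (Y i 0 (-L)) (Y i 0 L),
      lam i (w t (Xc i t z)) = lb i := by
    intro i t ht z hz
    have ht0 : 0 ≤ t := htL.le.trans ht.le
    obtain ⟨hleft, hright⟩ := (hsep t ht).eq_of_mem_Icc (hminus · t _ ht0) (hplus · t _ ht0)
      ⟨(hY i).inv_strictMono ht0 |>.monotone hz.1, (hY i).inv_strictMono ht0 |>.monotone hz.2⟩
    refine hlindeg i _ _ fun j hj => ?_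
    rcases lt_or_gt_of_ne hj with hji | hij
    · rw [hleft j hji, if_pos hji.le]
    · rw [hright j hij, if_neg hij.not_ge]
  set t0 := tL + 1
  refine ⟨tL, htL, fun i y => Xc i 0 (Y i t0 (y + lb i * t0)),
    fun i => ⟨_, ((hY i).lipschitzWith_inv le_rfl).comp (((hY i).lipschitzWith_slice
      (by positivity)).comp (IsometryEquiv.addRight _).isometry.lipschitz)⟩, fun t ht => ?_⟩
  have ht0 : 0 ≤ t := htL.le.trans ht.le
  refine ⟨(hsep t ht).1, (hsep t ht).2, Eventually.of_forall fun x => ?_⟩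
  obtain ⟨hleft, hmiddle, hright, hzone⟩ :=
    (hsep t ht).eq_on_regions (by omega) (hminus · t x ht0) (hplus · t x ht0)
  refine ⟨hleft, hmiddle, hright, fun i hx1 hx2 => ⟨(hzone i hx1 hx2).1, (hzone i hx1 hx2).2, ?_⟩⟩
  have hz : Y i t x ∈ Icc (Y i 0 (-L)) (Y i 0 L) :=
    ⟨(((hY i).inv_lt_iff ht0).1 hx1).le, ((hY i).le_inv_iff ht0).1 hx2⟩
  rw [hwsol i t x ht0, (hY i).apply_eq_of_speed_eq ((hY i).strictMono le_rfl (by linarith))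
    htL.le (hspeed i) ht (by linarith : tL < t0) hz]
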